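/- Suppose ρ : ℕ⁺ → K is a weight function and f(x) ∈ K[[x]] with f(0) = 1 satisfies 1 + Σ_{n≥1} (Σ_{F ∈ PF(n)} ∏_{v ∈ F} ρ(h_v)) x^n = f(x), where PF(n) is the set of plane forests with n vertices. Then for all n ≥ 1 with [x^{n-1}]f(x) ≠ 0, ρ(n) = −[x^n](f(x)^{-1}) / [x^{n-1}]f(x). -/

import Mathlib

/-- Plane trees: nonempty rooted trees whose subtrees at each vertex are linearly ordered. -/
inductive PTree : Type
  | node : List PTree → PTree

namespace PTree

mutual
/-- The number of vertices of a plane tree. -/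
def size : PTree → ℕ
  | .node cs => sizeList cs + 1
/-- The total number of vertices of a plane forest (a list of plane trees). -/
def sizeList : List PTree → ℕ
  | [] => 0
  | t :: ts => size t + sizeList ts
end

mutual
/-- The multiset of hook lengths of a plane tree: the hook length of a vertex
is the number of its descendants, counting the vertex itself. -/
def hooks : PTree → Multiset ℕ+
  | .node cs => ⟨sizeList cs + 1, Nat.succ_pos _⟩ ::ₘ hooksList cs
/-- The multiset of hook lengths of a plane forest. -/
def hooksList : List PTree → Multiset ℕ+
  | [] => 0
  | t :: ts => hooks t + hooksList ts
end

end PTree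

/-!
Splitting a nonempty forest into the children of its first root and the remaining trees gives
the recursion `F_{m+1} = ∑_{i+j=m} ρ(i+1) F_i F_j` for the total weight `F_n` of forests with
`n` vertices, the first root having hook length `i+1`. For the generating series this reads
`F = 1 + G F` with `G = ∑_{k≥1} ρ(k) F_{k-1} x^k`, so `F⁻¹ = 1 - G`, and comparing the coefficients
of `x^n` gives `ρ(n) F_{n-1} = -[x^n] F⁻¹`.
-/

open PowerSeries Finset

namespace PTree

@[simp] lemma size_node (cs : List PTree) : size (.node cs) = sizeList cs + 1 := by rw [size]
@[simp] lemma sizeList_nil : sizeList [] = 0 := by rw [sizeList]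
@[simp] lemma sizeList_cons (t : PTree) (ts : List PTree) :
    sizeList (t :: ts) = size t + sizeList ts := by rw [sizeList]
@[simp] lemma hooks_node (cs : List PTree) :
    hooks (.node cs) = (sizeList cs).succPNat ::ₘ hooksList cs := by rw [hooks]; rfl
@[simp] lemma hooksList_nil : hooksList [] = 0 := by rw [hooksList]
@[simp] lemma hooksList_cons (t : PTree) (ts : List PTree) :
    hooksList (t :: ts) = hooks t + hooksList ts := by rw [hooksList]

lemma size_pos (t : PTree) : 0 < size t := by cases t; simp

lemma sizeList_eq_zero_iff {l : List PTree} : sizeList l = 0 ↔ l = [] := by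
  cases l with
  | nil => simp
  | cons t ts => simp [(size_pos t).ne']

abbrev Forests (n : ℕ) : Type := {l : List PTree // sizeList l = n}

instance : Unique (Forests 0) where
  default := ⟨[], sizeList_nil⟩
  uniq l := Subtype.ext (sizeList_eq_zero_iff.mp l.2)

/-- A forest with `m + 1` vertices is its first root together with the forest of that root's
children and the forest of the remaining trees. -/
def forestsSuccEquiv (m : ℕ) :
    Forests (m + 1) ≃ Σ p : antidiagonal m, Forests p.1.1 × Forests p.1.2 where
  toFun
    | ⟨[], h⟩ => absurd h (by simp)
    | ⟨node cs :: ts, h⟩ =>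
        ⟨⟨(sizeList cs, sizeList ts), by simp at h; simp; omega⟩, ⟨cs, rfl⟩, ⟨ts, rfl⟩⟩
  invFun
    | ⟨⟨_, hp⟩, ⟨cs, hcs⟩, ⟨ts, hts⟩⟩ =>
        ⟨node cs :: ts, by
          rw [HasAntidiagonal.mem_antidiagonal] at hp
          simp [hcs, hts, ← hp]
          omega⟩
  left_inv
    | ⟨[], h⟩ => absurd h (by simp)
    | ⟨node _ :: _, _⟩ => rfl
  right_inv
    | ⟨⟨(_, _), _⟩, ⟨_, hcs⟩, ⟨_, hts⟩⟩ => by dsimp only at hcs hts; subst hcs hts; rfl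

instance (n : ℕ) : Finite (Forests n) := by
  induction n using Nat.strong_induction_on with
  | _ n ih =>
    match n with
    | 0 => infer_instance
    | m + 1 =>
      have (p : antidiagonal m) : Finite (Forests p.1.1 × Forests p.1.2) := by
        have := HasAntidiagonal.mem_antidiagonal.mp p.2
        have := ih p.1.1 (by omega)
        have := ih p.1.2 (by omega)
        infer_instance
      exact Finite.of_equiv _ (forestsSuccEquiv m).symm

section Weights

variable {K : Type*} [CommSemiring K] (ρ : ℕ+ → K)

def weight (l : List PTree) : K := ((hooksList l).map ρ).prod

lemma weight_node_cons (cs ts : List PTree) :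
    weight ρ (node cs :: ts) = ρ (sizeList cs).succPNat * weight ρ cs * weight ρ ts := by
  simp only [weight, hooksList_cons, hooks_node, Multiset.map_add, Multiset.map_cons,
    Multiset.prod_add, Multiset.prod_cons, mul_assoc]

noncomputable def forestWeight (n : ℕ) : K := ∑ᶠ F : Forests n, weight ρ F

lemma forestWeight_eq_sum (n : ℕ) [Fintype (Forests n)] :
    forestWeight ρ n = ∑ F : Forests n, weight ρ F :=
  finsum_eq_sum_of_fintype _

@[simp] lemma forestWeight_zero : forestWeight ρ 0 = 1 := by
  rw [forestWeight, finsum_unique]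
  simp [weight, default]

lemma forestWeight_succ (m : ℕ) :
    forestWeight ρ (m + 1) = ∑ p ∈ antidiagonal m,
      ρ p.1.succPNat * forestWeight ρ p.1 * forestWeight ρ p.2 := by
  have (n : ℕ) : Fintype (Forests n) := Fintype.ofFinite _
  rw [forestWeight_eq_sum, ← (forestsSuccEquiv m).symm.sum_comp, Fintype.sum_sigma,
    ← Finset.sum_coe_sort (antidiagonal m)]
  refine Finset.sum_congr rfl fun ⟨(i, j), _⟩ _ => ?_
  rw [forestWeight_eq_sum, forestWeight_eq_sum, mul_assoc, Finset.sum_mul_sum,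
    Fintype.sum_prod_type]
  simp only [Finset.mul_sum]
  refine Finset.sum_congr rfl fun ⟨cs, hcs⟩ _ => Finset.sum_congr rfl fun ⟨ts, hts⟩ _ => ?_
  subst hcs hts
  rw [← mul_assoc]
  exact weight_node_cons ρ cs ts

noncomputable def forestSeries : K⟦X⟧ := PowerSeries.mk (forestWeight ρ)

/-- The generating series of the weights of single trees: a tree with `k` vertices has root hook
length `k` and a forest with `k - 1` vertices below its root. -/
noncomputable def treeSeries : K⟦X⟧ := X * PowerSeries.mk fun j => ρ j.succPNat * forestWeight ρ j

lemma forestSeries_eq_one_add_treeSeries_mul :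
    forestSeries ρ = 1 + treeSeries ρ * forestSeries ρ := by
  ext (_ | m)
  · simp [forestSeries, treeSeries]
  · rw [treeSeries, mul_assoc, map_add, coeff_succ_X_mul, coeff_mul, coeff_one,
      if_neg m.succ_ne_zero, zero_add]
    simp [forestSeries, forestWeight_succ, mul_assoc]

end Weights

lemma forestSeries_inv {K : Type*} [Field K] (ρ : ℕ+ → K) :
    (forestSeries ρ)⁻¹ = 1 - treeSeries ρ := by
  rw [PowerSeries.inv_eq_iff_mul_eq_one (by simp [forestSeries])]
  linear_combination forestSeries_eq_one_add_treeSeries_mul ρ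

end PTree

open PTree in
/-- The expansion formula for plane forests. -/
theorem expansion_formula_plane_forests {K : Type*} [Field K] (ρ : ℕ+ → K)
    (f : PowerSeries K) (h0 : PowerSeries.constantCoeff f = 1)
    (hf : ∀ n : ℕ, 1 ≤ n → PowerSeries.coeff n f =
      ∑ᶠ F : {l : List PTree // PTree.sizeList l = n},
        (PTree.hooksList (F : List PTree) |>.map fun h => ρ h).prod)
    (n : ℕ+) (hne : PowerSeries.coeff ((n : ℕ) - 1) f ≠ 0) :
    ρ n = -(PowerSeries.coeff (n : ℕ) f⁻¹) / PowerSeries.coeff ((n : ℕ) - 1) f := by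
  have hfF : f = forestSeries ρ := by
    ext (_ | m)
    · simpa [forestSeries] using h0
    · exact (hf (m + 1) m.succ_pos).trans (coeff_mk (m + 1) (forestWeight ρ)).symm
  obtain ⟨m, rfl⟩ : ∃ m : ℕ, n = m.succPNat := ⟨n.natPred, n.succPNat_natPred.symm⟩
  subst hfF
  rw [forestSeries_inv]
  simp [treeSeries, forestSeries, coeff_succ_X_mul] at hne ⊢
  field_simp
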